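/- arXiv:2507.17715 — 4 statements merged into one kernel-verified Lean document; each statement's English description precedes it below -/
import Mathlib

section
/- Let A be an ortholattice and E a quantifier on A. Define the relation R on F(A) by x R y iff {E a : a ∈ x} ⊆ y, and define x ⊥ y iff there exists a ∈ x with aᗮ ∈ y. Then R is reflexive and transitive, and for every x ∈ F(A) the set R[{x}]^⊥ is closed under R: if y ∈ R[{x}]^⊥ and y R z, then z ∈ R[{x}]^⊥. -/
/-- An orthocomplementation on a bounded lattice. -/
def IsOrtho {A : Type*} [Lattice A] [BoundedOrder A] (perp : A → A) : Prop :=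
  (∀ a : A, a ⊓ perp a = ⊥) ∧ (∀ a : A, a ⊔ perp a = ⊤) ∧
  (∀ a b : A, a ≤ b → perp b ≤ perp a) ∧ (∀ a : A, perp (perp a) = a)

/-- A quantifier on an ortholattice. -/
def IsQuantifier {A : Type*} [Lattice A] [BoundedOrder A] (perp E : A → A) : Prop :=
  (∀ a b : A, E (a ⊔ b) = E a ⊔ E b) ∧ E ⊥ = ⊥ ∧ (∀ a : A, E (E a) = E a) ∧
  (∀ a : A, a ≤ E a) ∧ (∀ a : A, E (perp (E a)) = perp (E a))

/-- A proper filter: nonempty, upward closed, closed under meets, not containing ⊥. -/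
def IsPF {A : Type*} [Lattice A] [BoundedOrder A] (x : Set A) : Prop :=
  x.Nonempty ∧ (∀ a ∈ x, ∀ b : A, a ≤ b → b ∈ x) ∧
  (∀ a ∈ x, ∀ b ∈ x, a ⊓ b ∈ x) ∧ (⊥ : A) ∉ x

/-- The set of proper filters of `A`. -/
abbrev PF (A : Type*) [Lattice A] [BoundedOrder A] : Type _ := {x : Set A // IsPF x}

/-- `phi a` is the set of proper filters containing `a`. -/
def phi {A : Type*} [Lattice A] [BoundedOrder A] (a : A) : Set (PF A) := {x | a ∈ x.1}

/-- Orthogonal of a set of proper filters: `x ⊥ y` iff some `a ∈ x` has `perp a ∈ y`. -/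
def oPerp {A : Type*} [Lattice A] [BoundedOrder A] (perp : A → A) (U : Set (PF A)) :
    Set (PF A) := {x | ∀ y ∈ U, ∃ a ∈ x.1, perp a ∈ y.1}

/-
Proof idea: reflexivity of `R` is `a ≤ E a` and transitivity is `E (E a) = E a`. For the last claim
let `y ⊥ R[{x}]`, `y R z` and `x R w`. The upward closure `w'` of `E '' w` is again a proper filter
with `x R w'`, so some `a ∈ y` has `aᗮ ≥ E c` for a `c ∈ w`. Then `(E c)ᗮ ∈ y`, hence
`E (E c)ᗮ = (E c)ᗮ ∈ z`, while `(E c)ᗮᗮ = E c ∈ w`: this witnesses `z ⊥ w`.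
-/

section

variable {A : Type*} [Lattice A] [BoundedOrder A] {perp E : A → A}

theorem IsPF.mem_of_le {x : Set A} (hx : IsPF x) {a b : A} (ha : a ∈ x) (hab : a ≤ b) : b ∈ x :=
  hx.2.1 a ha b hab

theorem IsOrtho.antitone (hA : IsOrtho perp) : Antitone perp := hA.2.2.1

theorem IsOrtho.perp_perp (hA : IsOrtho perp) (a : A) : perp (perp a) = a := hA.2.2.2 a

theorem IsOrtho.le_perp_comm (hA : IsOrtho perp) {a b : A} (h : a ≤ perp b) : b ≤ perp a := by
  simpa only [hA.perp_perp] using hA.antitone h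

namespace IsQuantifier

theorem map_sup (hE : IsQuantifier perp E) (a b : A) : E (a ⊔ b) = E a ⊔ E b := hE.1 a b

theorem apply_apply (hE : IsQuantifier perp E) (a : A) : E (E a) = E a := hE.2.2.1 a

theorem le_apply (hE : IsQuantifier perp E) (a : A) : a ≤ E a := hE.2.2.2.1 a

theorem apply_perp_apply (hE : IsQuantifier perp E) (a : A) : E (perp (E a)) = perp (E a) :=
  hE.2.2.2.2 a

theorem monotone (hE : IsQuantifier perp E) : Monotone E := fun a b hab =>
  le_sup_left.trans_eq (by rw [← hE.map_sup, sup_eq_right.2 hab])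

theorem image_subset_self (hE : IsQuantifier perp E) (x : PF A) : E '' x.1 ⊆ x.1 := by
  rintro _ ⟨a, ha, rfl⟩
  exact x.2.mem_of_le ha (hE.le_apply a)

theorem image_subset_trans (hE : IsQuantifier perp E) {x y z : Set A} (hxy : E '' x ⊆ y)
    (hyz : E '' y ⊆ z) : E '' x ⊆ z := by
  rintro _ ⟨a, ha, rfl⟩
  rw [← hE.apply_apply a]
  exact hyz ⟨E a, hxy ⟨a, ha, rfl⟩, rfl⟩

theorem isPF_upperClosure_image (hE : IsQuantifier perp E) {w : Set A} (hw : IsPF w) :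
    IsPF (upperClosure (E '' w) : Set A) := by
  simp only [IsPF, SetLike.mem_coe, mem_upperClosure]
  refine ⟨?_, ?_, ?_, ?_⟩
  · obtain ⟨c, hc⟩ := hw.1
    exact ⟨E c, ⟨E c, ⟨c, hc, rfl⟩, le_rfl⟩⟩
  · rintro a ⟨_, ⟨c, hc, rfl⟩, hca⟩ b hab
    exact ⟨E c, ⟨c, hc, rfl⟩, hca.trans hab⟩
  · rintro a ⟨_, ⟨c, hc, rfl⟩, hca⟩ b ⟨_, ⟨d, hd, rfl⟩, hdb⟩
    exact ⟨E (c ⊓ d), ⟨c ⊓ d, hw.2.2.1 c hc d hd, rfl⟩,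
      le_inf ((hE.monotone inf_le_left).trans hca) ((hE.monotone inf_le_right).trans hdb)⟩
  · rintro ⟨_, ⟨c, hc, rfl⟩, hc_bot⟩
    exact hw.2.2.2 (hw.mem_of_le hc ((hE.le_apply c).trans hc_bot))

theorem image_subset_upperClosure_image (hE : IsQuantifier perp E) {x w : Set A}
    (hxw : E '' x ⊆ w) : E '' x ⊆ upperClosure (E '' w) := by
  rintro _ ⟨a, ha, rfl⟩
  exact subset_upperClosure ⟨E a, hxw ⟨a, ha, rfl⟩, hE.apply_apply a⟩

theorem mem_oPerp_of_image_subset (hA : IsOrtho perp) (hE : IsQuantifier perp E) {x y z : PF A}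
    (hy : y ∈ oPerp perp {w : PF A | E '' x.1 ⊆ w.1}) (hyz : E '' y.1 ⊆ z.1) :
    z ∈ oPerp perp {w : PF A | E '' x.1 ⊆ w.1} := by
  intro w hxw
  obtain ⟨a, hay, _, ⟨c, hcw, rfl⟩, hEc⟩ :=
    hy ⟨_, hE.isPF_upperClosure_image w.2⟩ (hE.image_subset_upperClosure_image hxw)
  have hy_perp : perp (E c) ∈ y.1 := y.2.mem_of_le hay (hA.le_perp_comm hEc)
  refine ⟨perp (E c), ?_, ?_⟩
  · simpa only [hE.apply_perp_apply c] using hyz ⟨_, hy_perp, rfl⟩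
  · simpa only [hA.perp_perp (E c)] using w.2.mem_of_le hcw (hE.le_apply c)

end IsQuantifier

end

theorem stmt2 {A : Type*} [Lattice A] [BoundedOrder A] (perp : A → A)
    (hA : IsOrtho perp) (E : A → A) (hE : IsQuantifier perp E) :
    (∀ x : PF A, E '' x.1 ⊆ x.1) ∧
    (∀ x y z : PF A, E '' x.1 ⊆ y.1 → E '' y.1 ⊆ z.1 → E '' x.1 ⊆ z.1) ∧
    (∀ x : PF A, ∀ y ∈ oPerp perp {y : PF A | E '' x.1 ⊆ y.1},
      ∀ z : PF A, E '' y.1 ⊆ z.1 → z ∈ oPerp perp {y : PF A | E '' x.1 ⊆ y.1}) :=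
  ⟨hE.image_subset_self, fun _ _ _ => hE.image_subset_trans,
    fun _ _ hy _ hyz => hE.mem_oPerp_of_image_subset hA hy hyz⟩
end

section
/- Let A be an ortholattice and let S, T ⊆ A. If every proper filter of A containing all elements of S belongs to (⋃_{b∈T} φ(b))^⊥⊥ (that is, ⋂_{a∈S} φ(a) ⊆ (⋃_{b∈T} φ(b))^⊥⊥, where the intersection over the empty index set is all of F(A)), then there exist finite subsets S' ⊆ S and T' ⊆ T such that ⋂_{a∈S'} φ(a) ⊆ (⋃_{b∈T'} φ(b))^⊥⊥. (This is the compactness of the embedding φ of A into the lattice of biorthogonally closed subsets of F(A), in which meets are intersections and the join of a family is the biorthogonal closure of its union.) -/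
/-!
If `⟨S⟩` is the filter generated by `S` and `⟨Tᗮ⟩` the filter generated by `{bᗮ : b ∈ T}`,
then `⟨S⟩ ∈ ⋂_{a∈S} φ(a)` and `⟨Tᗮ⟩ ∈ (⋃_{b∈T} φ(b))^⊥`, so the hypothesis makes them orthogonal:
some `a ∈ ⟨S⟩` has `aᗮ ∈ ⟨Tᗮ⟩`. Unfolding the two generated filters gives finite `S' ⊆ S`,
`T' ⊆ T` with `⋀_{b∈T'} bᗮ ≤ (⋀ S')ᗮ`, and this inequality alone already forces
`⋂_{a∈S'} φ(a) ⊆ (⋃_{b∈T'} φ(b))^⊥⊥`. If one of the generated filters contains `⊥`, the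
corresponding finite meet is `⊥` and the conclusion is immediate.
-/

section

variable {A : Type*} [Lattice A] [BoundedOrder A]

lemma IsPF.top_mem {x : Set A} (hx : IsPF x) : (⊤ : A) ∈ x := by
  obtain ⟨a, ha⟩ := hx.1
  exact hx.2.1 a ha ⊤ le_top

lemma IsPF.finset_inf_mem {x : Set A} (hx : IsPF x) {ι : Type*} {f : ι → A} {F : Finset ι}
    (hF : ∀ i ∈ F, f i ∈ x) : F.inf f ∈ x :=
  Finset.inf_mem x hx.top_mem hx.2.2.1 F f hF

lemma isPF_Ici {b : A} (hb : b ≠ ⊥) : IsPF (Set.Ici b) :=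
  ⟨⟨b, le_rfl⟩, fun _ ha _ hc => le_trans ha hc, fun _ ha _ hc => le_inf ha hc,
    fun hbot => hb (le_bot_iff.1 hbot)⟩

def genFilter {ι : Type*} (f : ι → A) (s : Set ι) : Set A :=
  {c | ∃ F : Finset ι, ↑F ⊆ s ∧ F.inf f ≤ c}

section genFilter

variable {ι : Type*} {f : ι → A} {s : Set ι}

lemma apply_mem_genFilter {i : ι} (hi : i ∈ s) : f i ∈ genFilter f s :=
  ⟨{i}, by simpa using hi, by simp⟩

lemma exists_inf_eq_bot_or_isPF_genFilter (f : ι → A) (s : Set ι) :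
    (∃ F : Finset ι, ↑F ⊆ s ∧ F.inf f = ⊥) ∨ IsPF (genFilter f s) := by
  classical
  refine or_iff_not_imp_left.2 fun hproper => ⟨⟨⊤, ∅, by simp⟩, ?_, ?_, ?_⟩
  · rintro a ⟨F, hFs, hFa⟩ b hab
    exact ⟨F, hFs, hFa.trans hab⟩
  · rintro a ⟨F, hFs, hFa⟩ b ⟨G, hGs, hGb⟩
    refine ⟨F ∪ G, by simpa using And.intro hFs hGs, ?_⟩
    rw [Finset.inf_union]
    exact inf_le_inf hFa hGb
  · rintro ⟨F, hFs, hFbot⟩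
    exact hproper ⟨F, hFs, le_bot_iff.1 hFbot⟩

end genFilter

section orthogonality

variable {perp : A → A}

lemma perp_bot_eq_top (hanti : Antitone perp) (hinv : Function.Involutive perp) :
    perp ⊥ = ⊤ :=
  eq_top_iff.2 (hinv ⊤ ▸ hanti bot_le)

lemma mem_iInter_phi {S : Set A} {x : PF A} : x ∈ ⋂ a ∈ S, phi a ↔ S ⊆ x.1 := by
  simp only [Set.mem_iInter, phi, Set.mem_ofPred_eq, Set.subset_def]

lemma mem_oPerp_iUnion_phi (hanti : Antitone perp) (hinv : Function.Involutive perp)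
    {T : Set A} {y : PF A} :
    y ∈ oPerp perp (⋃ b ∈ T, phi b) ↔ ∀ b ∈ T, perp b ∈ y.1 := by
  constructor
  · intro hy b hb
    by_cases hb0 : b = ⊥
    · rw [hb0, perp_bot_eq_top hanti hinv]
      exact y.2.top_mem
    obtain ⟨a, ha, hpa⟩ := hy ⟨_, isPF_Ici hb0⟩ (Set.mem_biUnion hb le_rfl)
    have hab : a ≤ perp b := hinv a ▸ hanti hpa
    exact y.2.2.1 a ha _ hab
  · rintro hy z hz
    obtain ⟨b, hb, hbz⟩ := Set.mem_iUnion₂.1 hz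
    exact ⟨perp b, hy b hb, (hinv b).symm ▸ hbz⟩

lemma iInter_phi_subset_oPerp_oPerp_of_inf_le (hanti : Antitone perp)
    (hinv : Function.Involutive perp) ⦃S' T' : Finset A⦄
    (hle : T'.inf perp ≤ perp (S'.inf id)) :
    (⋂ a ∈ S', phi a) ⊆ oPerp perp (oPerp perp (⋃ b ∈ T', phi b)) := by
  intro x hx y hy
  have hSx : S'.inf id ∈ x.1 := x.2.finset_inf_mem fun a ha => Set.mem_iInter₂.1 hx a ha
  have hTy : T'.inf perp ∈ y.1 :=
    y.2.finset_inf_mem fun b hb => (mem_oPerp_iUnion_phi hanti hinv).1 hy b hb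
  exact ⟨_, hSx, y.2.2.1 _ hTy _ hle⟩

end orthogonality

end

theorem stmt5 {A : Type*} [Lattice A] [BoundedOrder A] (perp : A → A)
    (hA : IsOrtho perp) (S T : Set A)
    (h : (⋂ a ∈ S, phi a) ⊆ oPerp perp (oPerp perp (⋃ b ∈ T, phi b))) :
    ∃ S' T' : Finset A, (S' : Set A) ⊆ S ∧ (T' : Set A) ⊆ T ∧
      (⋂ a ∈ S', phi a) ⊆ oPerp perp (oPerp perp (⋃ b ∈ T', phi b)) := by
  have hanti : Antitone perp := fun a b hab => hA.2.2.1 a b hab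
  have hinv : Function.Involutive perp := hA.2.2.2
  have hfin := iInter_phi_subset_oPerp_oPerp_of_inf_le hanti hinv
  obtain ⟨F, hFS, hF⟩ | hxS := exists_inf_eq_bot_or_isPF_genFilter id S
  · exact ⟨F, ∅, hFS, by simp, hfin (by simp [hF, perp_bot_eq_top hanti hinv])⟩
  obtain ⟨G, hGT, hG⟩ | hyT := exists_inf_eq_bot_or_isPF_genFilter perp T
  · exact ⟨∅, G, by simp, hGT, hfin (by simp [hG])⟩
  obtain ⟨a, ⟨F, hFS, hFa⟩, G, hGT, hGa⟩ :=
    h (a := ⟨_, hxS⟩) (mem_iInter_phi.2 fun _ ha => apply_mem_genFilter ha)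
      ⟨_, hyT⟩ ((mem_oPerp_iUnion_phi hanti hinv).2 fun _ hb => apply_mem_genFilter hb)
  exact ⟨F, G, hFS, hGT, hfin (hGa.trans (hanti hFa))⟩
end

section
/- Let A be an ortholattice, and topologize F(A) by taking the family {φ(a) : a ∈ A} as a basis of open sets. Then a subset U ⊆ F(A) is compact, open, and biorthogonally closed if and only if U = φ(a) for some a ∈ A. -/
open Set TopologicalSpace

theorem IsCompact.of_forall_specializes {X : Type*} [TopologicalSpace X] {s : Set X} {p : X}
    (hp : p ∈ s) (h : ∀ x ∈ s, x ⤳ p) : IsCompact s := by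
  intro f hf hfs
  have hf_le : f ≤ nhds p := (nhds_basis_opens p).ge_iff.2 fun U ⟨hpU, hU⟩ =>
    Filter.mem_of_superset (Filter.le_principal_iff.1 hfs) fun x hx => (h x hx).mem_open hU hpU
  exact ⟨p, hp, by rwa [ClusterPt, inf_of_le_right hf_le]⟩

section OrthoFilters

variable {A : Type*} [Lattice A] [BoundedOrder A]

namespace IsOrtho

variable {perp : A → A} (hA : IsOrtho perp)
include hA

theorem perp_perp_s11 (a : A) : perp (perp a) = a := hA.2.2.2 a

theorem perp_anti {a b : A} (h : a ≤ b) : perp b ≤ perp a := hA.2.2.1 a b h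

theorem le_perp_comm_s11 {a b : A} : a ≤ perp b ↔ b ≤ perp a := by
  have key : ∀ {a b : A}, a ≤ perp b → b ≤ perp a := fun {a b} h => by
    simpa only [hA.perp_perp_s11] using hA.perp_anti h
  exact ⟨key, key⟩

theorem perp_bot : perp (⊥ : A) = ⊤ := by
  simpa only [bot_sup_eq] using hA.2.1 ⊥

end IsOrtho

namespace PF

theorem mem_of_le (x : PF A) {a b : A} (ha : a ∈ x.1) (hab : a ≤ b) : b ∈ x.1 :=
  x.2.2.1 a ha b hab

theorem inf_mem (x : PF A) {a b : A} (ha : a ∈ x.1) (hb : b ∈ x.1) : a ⊓ b ∈ x.1 :=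
  x.2.2.2.1 a ha b hb

theorem top_mem (x : PF A) : (⊤ : A) ∈ x.1 :=
  let ⟨_, ha⟩ := x.2.1
  x.mem_of_le ha le_top

theorem bot_notMem (x : PF A) : (⊥ : A) ∉ x.1 := x.2.2.2.2

def principal (a : A) (ha : a ≠ ⊥) : PF A :=
  ⟨Ici a, ⟨a, le_rfl⟩, fun _ hc _ hcb => le_trans hc hcb, fun _ hc _ hb => le_inf hc hb,
    fun h => ha (le_bot_iff.1 h)⟩

end PF

theorem mem_phi {a : A} {x : PF A} : x ∈ phi a ↔ a ∈ x.1 := Iff.rfl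

theorem phi_inf (a b : A) : phi (a ⊓ b) = phi a ∩ phi b := by
  ext x
  exact ⟨fun h => ⟨x.mem_of_le h inf_le_left, x.mem_of_le h inf_le_right⟩,
    fun h => x.inf_mem h.1 h.2⟩

theorem phi_top : phi (⊤ : A) = univ :=
  eq_univ_of_forall PF.top_mem

theorem phi_bot : phi (⊥ : A) = ∅ :=
  eq_empty_of_forall_notMem PF.bot_notMem

theorem principal_mem_phi {a b : A} (ha : a ≠ ⊥) : PF.principal a ha ∈ phi b ↔ a ≤ b := Iff.rfl

@[reducible] def phiTopology : TopologicalSpace (PF A) := generateFrom (range phi)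

section Topology

attribute [local instance] phiTopology

theorem isTopologicalBasis_range_phi : IsTopologicalBasis (range (phi : A → Set (PF A))) := by
  refine ⟨?_, ?_, rfl⟩
  · rintro _ ⟨a, rfl⟩ _ ⟨b, rfl⟩ x hx
    exact ⟨phi (a ⊓ b), ⟨a ⊓ b, rfl⟩, by rwa [phi_inf], by rw [phi_inf]⟩
  · exact sUnion_eq_univ_iff.2 fun x => ⟨phi ⊤, ⟨⊤, rfl⟩, x.top_mem⟩

theorem isOpen_phi (a : A) : IsOpen (phi a) :=
  isTopologicalBasis_range_phi.isOpen ⟨a, rfl⟩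

theorem specializes_principal {a : A} (ha : a ≠ ⊥) {x : PF A} (hx : x ∈ phi a) :
    x ⤳ PF.principal a ha := by
  refine specializes_iff_forall_open.2 fun U hU hpU => ?_
  obtain ⟨_, ⟨b, rfl⟩, hpb, hbU⟩ := isTopologicalBasis_range_phi.exists_subset_of_mem_open hpU hU
  exact hbU (x.mem_of_le hx ((principal_mem_phi ha).1 hpb))

theorem isCompact_phi (a : A) : IsCompact (phi a) := by
  rcases eq_or_ne a ⊥ with rfl | ha
  · simp only [phi_bot, isCompact_empty]
  · exact .of_forall_specializes ((principal_mem_phi ha).2 le_rfl)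
      fun _ => specializes_principal ha

theorem isCompact_and_isOpen_iff (U : Set (PF A)) :
    IsCompact U ∧ IsOpen U ↔ ∃ s : Set A, s.Finite ∧ U = ⋃ a ∈ s, phi a :=
  isCompact_open_iff_eq_finite_iUnion_of_isTopologicalBasis phi isTopologicalBasis_range_phi
    isCompact_phi U

end Topology

section Orthogonal

variable {perp : A → A}

theorem oPerp_empty : oPerp perp (∅ : Set (PF A)) = univ := by
  ext x
  simp [oPerp]

theorem oPerp_union (U V : Set (PF A)) :
    oPerp perp (U ∪ V) = oPerp perp U ∩ oPerp perp V := by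
  ext x
  simp only [oPerp, mem_union, or_imp, forall_and, mem_inter_iff, mem_ofPred_eq]

theorem oPerp_phi (hA : IsOrtho perp) (a : A) : oPerp perp (phi a) = phi (perp a) := by
  ext x
  refine ⟨fun hx => ?_, fun hx y hy => ⟨perp a, hx, by rwa [hA.perp_perp_s11]⟩⟩
  rcases eq_or_ne a ⊥ with rfl | ha
  · rw [mem_phi, hA.perp_bot]
    exact x.top_mem
  · obtain ⟨c, hc, hac⟩ := hx (PF.principal a ha) ((principal_mem_phi ha).2 le_rfl)
    exact x.mem_of_le hc (hA.le_perp_comm_s11.1 hac)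

theorem exists_oPerp_biUnion_phi_eq (hA : IsOrtho perp) {s : Set A} (hs : s.Finite) :
    ∃ c, oPerp perp (⋃ a ∈ s, phi a) = phi c := by
  induction s, hs using Set.Finite.induction_on with
  | empty => exact ⟨⊤, by rw [biUnion_empty, oPerp_empty, phi_top]⟩
  | @insert b s _ _ ih =>
    obtain ⟨c, hc⟩ := ih
    exact ⟨perp b ⊓ c, by rw [biUnion_insert, oPerp_union, hc, oPerp_phi hA, phi_inf]⟩

end Orthogonal

end OrthoFilters

theorem stmt11 {A : Type*} [Lattice A] [BoundedOrder A] (perp : A → A)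
    (hA : IsOrtho perp) (U : Set (PF A)) :
    (@IsCompact (PF A) (TopologicalSpace.generateFrom (Set.range (phi : A → Set (PF A)))) U ∧
     @IsOpen (PF A) (TopologicalSpace.generateFrom (Set.range (phi : A → Set (PF A)))) U ∧
     U = oPerp perp (oPerp perp U)) ↔ ∃ a : A, U = phi a := by
  let _ : TopologicalSpace (PF A) := phiTopology
  constructor
  · rintro ⟨hcompact, hopen, hclosed⟩
    obtain ⟨s, hs, rfl⟩ := (isCompact_and_isOpen_iff U).1 ⟨hcompact, hopen⟩
    obtain ⟨c, hc⟩ := exists_oPerp_biUnion_phi_eq hA hs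
    exact ⟨perp c, by rw [hclosed, hc, oPerp_phi hA]⟩
  · rintro ⟨a, rfl⟩
    exact ⟨isCompact_phi a, isOpen_phi a, by rw [oPerp_phi hA, oPerp_phi hA, hA.perp_perp_s11]⟩
end

section
/- Let A be a Boolean algebra with quantifiers E and E' satisfying E(E' a) = E'(E a) for all a ∈ A. Define relations S and S' on F(A) by x S y iff {E a : a ∈ x} = {E a : a ∈ y}, and x S' y iff {E' a : a ∈ x} = {E' a : a ∈ y}. Then S and S' commute: for all x, z ∈ F(A), there exists y ∈ F(A) with x S y and y S' z if and only if there exists w ∈ F(A) with x S' w and w S z. -/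
/-- A quantifier on a Boolean algebra. -/
def IsQuantifierB {A : Type*} [BooleanAlgebra A] (E : A → A) : Prop :=
  (∀ a b : A, E (a ⊔ b) = E a ⊔ E b) ∧ E ⊥ = ⊥ ∧ (∀ a : A, E (E a) = E a) ∧
  (∀ a : A, a ≤ E a) ∧ (∀ a : A, E (E a)ᶜ = (E a)ᶜ)

/-!
If `x S y S' z`, then every `E'`-closed element `a` of `x` has `E a ∈ z` (since
`E a = E (E' a) = E' (E a)` is carried along `y`), and symmetrically every `E`-closed element of
`z` has its `E'`-image in `x`. These two transfer properties make the filter generated by the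
`E'`-closed elements of `x` together with the `E`-closed elements of `z` proper, and it is then
the required `w` with `x S' w S z`. Swapping `E` and `E'` gives the converse.
-/

section Quantifiers

variable {A : Type*} [BooleanAlgebra A] {E E' : A → A}

namespace IsQuantifierB

lemma monotone (hE : IsQuantifierB E) : Monotone E := fun a b h => by
  simpa [sup_eq_right.mpr h] using (hE.1 a b).ge

lemma map_top (hE : IsQuantifierB E) : E ⊤ = ⊤ :=
  top_le_iff.mp (hE.2.2.2.1 ⊤)

lemma map_inf_map (hE : IsQuantifierB E) (a b : A) : E (a ⊓ E b) = E a ⊓ E b := by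
  refine le_antisymm (le_inf (hE.monotone inf_le_left)
    ((hE.monotone inf_le_right).trans_eq (hE.2.2.1 b))) ?_
  -- `(E b)ᶜ` is `E`-closed, so the part of `E a` coming from `a ⊓ (E b)ᶜ` misses `E b`.
  have hsplit : E a = E (a ⊓ E b) ⊔ E (a ⊓ (E b)ᶜ) := by
    rw [← hE.1, ← inf_sup_left, sup_compl_eq_top, inf_top_eq]
  have hcompl : E (a ⊓ (E b)ᶜ) ≤ (E b)ᶜ :=
    (hE.monotone inf_le_right).trans_eq (hE.2.2.2.2 b)
  calc E a ⊓ E b ≤ (E (a ⊓ E b) ⊔ (E b)ᶜ) ⊓ E b := by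
        rw [hsplit]; exact inf_le_inf_right _ (sup_le_sup_left hcompl _)
    _ = E (a ⊓ E b) ⊓ E b := by rw [inf_sup_right, compl_inf_eq_bot, sup_bot_eq]
    _ ≤ E (a ⊓ E b) := inf_le_left

lemma map_inf_of_fixed (hE : IsQuantifierB E) {a b : A} (ha : E a = a) (hb : E b = b) :
    E (a ⊓ b) = a ⊓ b := by
  simpa only [hb, ha] using hE.map_inf_map a b

lemma map_inf_le_of_inf_le (hE : IsQuantifierB E) {a b c : A} (hb : E b = b)
    (h : a ⊓ b ≤ c) : E a ⊓ b ≤ E c := by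
  calc E a ⊓ b = E (a ⊓ b) := by simpa only [hb] using (hE.map_inf_map a b).symm
    _ ≤ E c := hE.monotone h

end IsQuantifierB

namespace IsPF

lemma top_mem_s14 {x : Set A} (hx : IsPF x) : ⊤ ∈ x := by
  obtain ⟨a, ha⟩ := hx.1
  exact hx.2.1 a ha ⊤ le_top

lemma image_eq_fixed (hE : IsQuantifierB E) {x : Set A} (hx : IsPF x) :
    E '' x = {b | b ∈ x ∧ E b = b} := by
  ext c
  constructor
  · rintro ⟨a, ha, rfl⟩
    exact ⟨hx.2.1 a ha _ (hE.2.2.2.1 a), hE.2.2.1 a⟩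
  · rintro ⟨hc, hfix⟩
    exact ⟨c, hc, hfix⟩

lemma map_mem_of_image_eq (hE : IsQuantifierB E) {x y : Set A} (hy : IsPF y)
    (hxy : E '' x = E '' y) {a : A} (ha : a ∈ x) : E a ∈ y := by
  have : E a ∈ E '' y := hxy ▸ Set.mem_image_of_mem E ha
  rw [hy.image_eq_fixed hE] at this
  exact this.1

end IsPF

lemma map_mem_of_image_eq_of_image_eq (hE : IsQuantifierB E) (hE' : IsQuantifierB E')
    (hcomm : ∀ a : A, E (E' a) = E' (E a)) {x y z : Set A} (hy : IsPF y) (hz : IsPF z)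
    (hxy : E '' x = E '' y) (hyz : E' '' y = E' '' z) {a : A} (ha : a ∈ x) (hfix : E' a = a) :
    E a ∈ z := by
  have := hz.map_mem_of_image_eq hE' hyz (hy.map_mem_of_image_eq hE hxy ha)
  rwa [← hcomm, hfix] at this

def fixedJoin (E E' : A → A) (x z : Set A) : Set A :=
  {c | ∃ a ∈ x, E' a = a ∧ ∃ b ∈ z, E b = b ∧ a ⊓ b ≤ c}

lemma fixedJoin_comm (x z : Set A) : fixedJoin E E' x z = fixedJoin E' E z x := by
  ext c
  constructor <;>
  · rintro ⟨a, ha, hfa, b, hb, hfb, hle⟩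
    exact ⟨b, hb, hfb, a, ha, hfa, inf_comm a b ▸ hle⟩

section fixedJoin

variable {x z : Set A} (hE : IsQuantifierB E) (hE' : IsQuantifierB E') (hx : IsPF x) (hz : IsPF z)
  (htransfer : ∀ a ∈ x, E' a = a → E a ∈ z)
include hE hz htransfer

lemma map_mem_of_mem_fixedJoin {c : A} (hc : c ∈ fixedJoin E E' x z) : E c ∈ z := by
  obtain ⟨a, ha, hfa, b, hb, hfb, hle⟩ := hc
  exact hz.2.1 _ (hz.2.2.1 _ (htransfer a ha hfa) b hb) _ (hE.map_inf_le_of_inf_le hfb hle)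

include hE' hx

lemma isPF_fixedJoin : IsPF (fixedJoin E E' x z) := by
  refine ⟨⟨⊤, ⊤, hx.top_mem_s14, hE'.map_top, ⊤, hz.top_mem_s14, hE.map_top, inf_le_left⟩, ?_, ?_, ?_⟩
  · rintro c ⟨a, ha, hfa, b, hb, hfb, hle⟩ d hcd
    exact ⟨a, ha, hfa, b, hb, hfb, hle.trans hcd⟩
  · rintro c ⟨a₁, ha₁, hfa₁, b₁, hb₁, hfb₁, hle₁⟩ d ⟨a₂, ha₂, hfa₂, b₂, hb₂, hfb₂, hle₂⟩
    refine ⟨a₁ ⊓ a₂, hx.2.2.1 _ ha₁ _ ha₂, hE'.map_inf_of_fixed hfa₁ hfa₂,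
      b₁ ⊓ b₂, hz.2.2.1 _ hb₁ _ hb₂, hE.map_inf_of_fixed hfb₁ hfb₂, ?_⟩
    rw [inf_inf_inf_comm]
    exact inf_le_inf hle₁ hle₂
  · intro hbot
    exact hz.2.2.2 (hE.2.1 ▸ map_mem_of_mem_fixedJoin hE hz htransfer hbot)

lemma image_fixedJoin : E '' fixedJoin E E' x z = E '' z := by
  rw [(isPF_fixedJoin hE hE' hx hz htransfer).image_eq_fixed hE, hz.image_eq_fixed hE]
  ext c
  constructor
  · rintro ⟨hc, hfix⟩
    exact ⟨hfix ▸ map_mem_of_mem_fixedJoin hE hz htransfer hc, hfix⟩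
  · rintro ⟨hc, hfix⟩
    exact ⟨⟨⊤, hx.top_mem_s14, hE'.map_top, c, hc, hfix, inf_le_right⟩, hfix⟩

end fixedJoin

lemma exists_rel_rel_of_rel_rel (hE : IsQuantifierB E) (hE' : IsQuantifierB E')
    (hcomm : ∀ a : A, E (E' a) = E' (E a)) {x y z : Set A} (hx : IsPF x) (hy : IsPF y)
    (hz : IsPF z) (hxy : E '' x = E '' y) (hyz : E' '' y = E' '' z) :
    ∃ w : PF A, E' '' x = E' '' w.1 ∧ E '' w.1 = E '' z := by
  have hxz : ∀ a ∈ x, E' a = a → E a ∈ z := fun a =>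
    map_mem_of_image_eq_of_image_eq hE hE' hcomm hy hz hxy hyz
  have hzx : ∀ b ∈ z, E b = b → E' b ∈ x := fun b =>
    map_mem_of_image_eq_of_image_eq hE' hE (fun a => (hcomm a).symm) hy hx hyz.symm hxy.symm
  refine ⟨⟨fixedJoin E E' x z, isPF_fixedJoin hE hE' hx hz hxz⟩, ?_,
    image_fixedJoin hE hE' hx hz hxz⟩
  change E' '' x = E' '' fixedJoin E E' x z
  rw [fixedJoin_comm]
  exact (image_fixedJoin hE' hE hz hx hzx).symm

end Quantifiers

theorem stmt14 {A : Type*} [BooleanAlgebra A] (E E' : A → A)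
    (hE : IsQuantifierB E) (hE' : IsQuantifierB E')
    (hcomm : ∀ a : A, E (E' a) = E' (E a)) (x z : PF A) :
    (∃ y : PF A, E '' x.1 = E '' y.1 ∧ E' '' y.1 = E' '' z.1) ↔
      (∃ w : PF A, E' '' x.1 = E' '' w.1 ∧ E '' w.1 = E '' z.1) :=
  ⟨fun ⟨y, hxy, hyz⟩ => exists_rel_rel_of_rel_rel hE hE' hcomm x.2 y.2 z.2 hxy hyz,
    fun ⟨w, hxw, hwz⟩ =>
      exists_rel_rel_of_rel_rel hE' hE (fun a => (hcomm a).symm) x.2 w.2 z.2 hxw hwz⟩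
end
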